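/- arXiv:2011.13166 — 2 statements merged into one kernel-verified Lean document; each statement's English description precedes it below -/
import Mathlib

section
/- Under the stated assumptions, the two-query gradient estimator satisfies the bias bound ‖E[ĝ(θ,c)] − ∇L(θ)‖ ≤ c²·D₁·D₂/6 for every θ ∈ ℝ^d and every c > 0, provided E[‖Δ‖³·‖φ(Δ)‖] ≤ D₂. (Bias part of Lemma 1: the bias of the simultaneous-perturbation gradient estimator is O(c²) with explicit constant.) -/
/-!
Along the line `s ↦ L (θ + s • v)` the Taylor expansions of order two at `s = 1` and `s = -1`
share their even terms, so `L (θ + v) - L (θ - v) = 2 DL(θ) v` up to two Lagrange remainders, each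
at most `D₁ ‖v‖³ / 6`. With `v = c Δ`, the noise-free part of the estimator is therefore
`⟪∇L(θ), Δ⟫ φ(Δ)` plus an error of norm at most `c² D₁ ‖Δ‖³ ‖φ(Δ)‖ / 6`. The first term has mean
`∇L(θ)` because `E[φ(Δ) Δᵀ] = I`, and the noise term has mean zero because `φ(Δ)` is
`σ(Δ)`-measurable and can be pulled out of `E[ε⁺ − ε⁻ | Δ] = 0`.
-/

open MeasureTheory

open Nat Set in
theorem exists_eq_taylor_add_lagrange_remainder {f : ℝ → ℝ} {n : ℕ} (hf : ContDiff ℝ (n + 1) f)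
    {x₀ x : ℝ} (hx : x₀ ≠ x) :
    ∃ ξ, f x = ∑ k ∈ Finset.range (n + 1), iteratedDeriv k f x₀ * (x - x₀) ^ k / k ! +
      iteratedDeriv (n + 1) f ξ * (x - x₀) ^ (n + 1) / (n + 1)! := by
  obtain ⟨ξ, -, hξ⟩ := taylor_mean_remainder_lagrange_iteratedDeriv hx hf.contDiffOn
  have htaylor : taylorWithinEval f n (uIcc x₀ x) x₀ x =
      ∑ k ∈ Finset.range (n + 1), iteratedDeriv k f x₀ * (x - x₀) ^ k / k ! := by
    rw [taylor_within_apply]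
    refine Finset.sum_congr rfl fun k hk => ?_
    have hkn : (k : WithTop ℕ∞) ≤ n + 1 := by
      exact_mod_cast (Finset.mem_range_succ_iff.mp hk).trans n.le_succ
    rw [iteratedDerivWithin_eq_iteratedDeriv (uniqueDiffOn_uIcc hx) (hf.of_le hkn).contDiffAt
      left_mem_uIcc, smul_eq_mul]
    ring
  exact ⟨ξ, by rw [← hξ, htaylor, add_sub_cancel]⟩

theorem abs_sub_sub_two_mul_deriv_le {f : ℝ → ℝ} (hf : ContDiff ℝ 3 f) {M : ℝ}
    (hM : ∀ t, |iteratedDeriv 3 f t| ≤ M) : |f 1 - f (-1) - 2 * deriv f 0| ≤ M / 3 := by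
  obtain ⟨ξ₁, h₁⟩ := exists_eq_taylor_add_lagrange_remainder (n := 2) hf (x₀ := 0) (x := 1)
    one_ne_zero.symm
  obtain ⟨ξ₂, h₂⟩ := exists_eq_taylor_add_lagrange_remainder (n := 2) hf (x₀ := 0) (x := -1)
    (neg_ne_zero.mpr one_ne_zero).symm
  have hsum : f 1 - f (-1) - 2 * deriv f 0 =
      (iteratedDeriv 3 f ξ₁ + iteratedDeriv 3 f ξ₂) / 6 := by
    norm_num [Finset.sum_range_succ, Nat.factorial] at h₁ h₂
    linarith
  rw [hsum, abs_div, abs_of_pos (by norm_num : (0:ℝ) < 6)]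
  linarith [abs_add_le (iteratedDeriv 3 f ξ₁) (iteratedDeriv 3 f ξ₂), hM ξ₁, hM ξ₂]

theorem iteratedDeriv_comp_line {E F : Type*} [NormedAddCommGroup E] [NormedSpace ℝ E]
    [NormedAddCommGroup F] [NormedSpace ℝ F] {L : E → F} {n : WithTop ℕ∞} (hL : ContDiff ℝ n L)
    {k : ℕ} (hk : k ≤ n) (θ v : E) (t : ℝ) :
    iteratedDeriv k (fun s : ℝ => L (θ + s • v)) t =
      iteratedFDeriv ℝ k L (θ + t • v) (fun _ => v) := by
  have hline : (fun s : ℝ => L (θ + s • v)) =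
      (fun y => L (θ + y)) ∘ ContinuousLinearMap.smulRight (1 : ℝ →L[ℝ] ℝ) v := rfl
  rw [iteratedDeriv_eq_iteratedFDeriv, hline, ContinuousLinearMap.iteratedFDeriv_comp_right _
    (f := fun y => L (θ + y)) (hL.comp (contDiff_const.add contDiff_id)) t hk,
    iteratedFDeriv_comp_add_left]
  simp only [ContinuousLinearMap.smulRight_apply, one_apply_eq_self,
    ContinuousMultilinearMap.compContinuousLinearMap_apply, one_smul]

section CentralDifference

variable {E : Type*} [NormedAddCommGroup E] [NormedSpace ℝ E]

theorem abs_sub_sub_two_mul_fderiv_le {L : E → ℝ} (hL : ContDiff ℝ 3 L) {D₁ : ℝ}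
    (hLbd : ∀ x, ‖iteratedFDeriv ℝ 3 L x‖ ≤ D₁) (θ v : E) :
    |L (θ + v) - L (θ - v) - 2 * fderiv ℝ L θ v| ≤ D₁ * ‖v‖ ^ 3 / 3 := by
  set f : ℝ → ℝ := fun s => L (θ + s • v)
  have hf : ContDiff ℝ 3 f := hL.comp (contDiff_const.add (contDiff_id.smul contDiff_const))
  have hf''' : ∀ t, |iteratedDeriv 3 f t| ≤ D₁ * ‖v‖ ^ 3 := fun t => by
    rw [iteratedDeriv_comp_line hL le_rfl, ← Real.norm_eq_abs]
    calc _ ≤ ‖iteratedFDeriv ℝ 3 L (θ + t • v)‖ * ∏ _ : Fin 3, ‖v‖ :=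
          ContinuousMultilinearMap.le_opNorm _ _
      _ ≤ D₁ * ‖v‖ ^ 3 := by rw [Finset.prod_const, Finset.card_fin]; gcongr; exact hLbd _
  have hf' : deriv f 0 = fderiv ℝ L θ v := by
    rw [← iteratedDeriv_one, iteratedDeriv_comp_line hL (by norm_num), iteratedFDeriv_one_apply]
    simp
  have := abs_sub_sub_two_mul_deriv_le hf hf'''
  simpa [f, hf', ← sub_eq_add_neg] using this

end CentralDifference

section SymmDiffQuot

variable {F : Type*} [NormedAddCommGroup F] [InnerProductSpace ℝ F] [CompleteSpace F]

noncomputable def symmDiffQuot (L : F → ℝ) (θ : F) (c : ℝ) (v : F) : ℝ :=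
  (L (θ + c • v) - L (θ - c • v)) / (2 * c)

theorem abs_symmDiffQuot_sub_inner_gradient_le {L : F → ℝ} (hL : ContDiff ℝ 3 L) {D₁ : ℝ}
    (hLbd : ∀ x, ‖iteratedFDeriv ℝ 3 L x‖ ≤ D₁) (θ v : F) {c : ℝ} (hc : 0 < c) :
    |symmDiffQuot L θ c v - inner ℝ (gradient L θ) v| ≤ c ^ 2 * D₁ / 6 * ‖v‖ ^ 3 := by
  have key := abs_sub_sub_two_mul_fderiv_le hL hLbd θ (c • v)
  rw [map_smul, ← inner_gradient_left, smul_eq_mul, norm_smul, Real.norm_eq_abs,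
    abs_of_pos hc] at key
  have hquot : symmDiffQuot L θ c v - inner ℝ (gradient L θ) v =
      (L (θ + c • v) - L (θ - c • v) - 2 * (c * inner ℝ (gradient L θ) v)) / (2 * c) := by
    unfold symmDiffQuot
    field_simp
  rw [hquot, abs_div, abs_of_pos (by positivity : (0 : ℝ) < 2 * c), div_le_iff₀ (by positivity)]
  exact key.trans_eq (by ring)

theorem norm_symmDiffQuot_sub_inner_gradient_smul_le {G : Type*} [NormedAddCommGroup G]
    [NormedSpace ℝ G] {L : F → ℝ} (hL : ContDiff ℝ 3 L) {D₁ : ℝ}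
    (hLbd : ∀ x, ‖iteratedFDeriv ℝ 3 L x‖ ≤ D₁) (θ v : F) (y : G) {c : ℝ} (hc : 0 < c) :
    ‖(symmDiffQuot L θ c v - inner ℝ (gradient L θ) v) • y‖ ≤
      c ^ 2 * D₁ / 6 * (‖v‖ ^ 3 * ‖y‖) := by
  rw [norm_smul, Real.norm_eq_abs, ← mul_assoc]
  gcongr
  exact abs_symmDiffQuot_sub_inner_gradient_le hL hLbd θ v hc

end SymmDiffQuot

theorem integral_smul_eq_zero_of_condExp_eq_zero {Ω E : Type*} {m m0 : MeasurableSpace Ω}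
    {μ : Measure Ω} [IsFiniteMeasure μ] [NormedAddCommGroup E] [NormedSpace ℝ E] [CompleteSpace E]
    (hm : m ≤ m0) {f : Ω → ℝ} {Y : Ω → E} (hf : Integrable f μ) (hf0 : μ[f|m] =ᵐ[μ] 0)
    (hY : AEStronglyMeasurable[m] Y μ) (hfY : Integrable (fun ω => f ω • Y ω) μ) :
    ∫ ω, f ω • Y ω ∂μ = 0 := by
  calc ∫ ω, f ω • Y ω ∂μ = ∫ ω, μ[f • Y|m] ω ∂μ := (integral_condExp hm).symm
    _ = ∫ ω, μ[f|m] ω • Y ω ∂μ :=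
      integral_congr_ae (condExp_smul_of_aestronglyMeasurable_right hf hfY hY)
    _ = 0 := integral_eq_zero_of_ae (by filter_upwards [hf0] with ω hω; simp [hω])

section IdentityCovariance

variable {ι Ω : Type*} [Fintype ι] {m0 : MeasurableSpace Ω} {μ : Measure Ω}
  {X Y : Ω → EuclideanSpace ℝ ι}

theorem inner_smul_apply_eq_sum (g x y : EuclideanSpace ℝ ι) (i : ι) :
    (inner ℝ g x • y) i = ∑ j, g j * (y i * x j) := by
  simp only [PiLp.smul_apply, smul_eq_mul, PiLp.inner_apply, Finset.sum_mul]
  refine Finset.sum_congr rfl fun j _ => ?_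
  simp only [RCLike.inner_apply, conj_trivial]
  ring

theorem integrable_inner_smul (hXY : ∀ i j, Integrable (fun ω => Y ω i * X ω j) μ)
    (g : EuclideanSpace ℝ ι) : Integrable (fun ω => inner ℝ g (X ω) • Y ω) μ := by
  refine Integrable.of_eval_piLp fun i => ?_
  simp only [inner_smul_apply_eq_sum]
  exact integrable_finsetSum _ fun j _ => (hXY i j).const_mul (g j)

theorem integral_inner_smul_eq_self [DecidableEq ι]
    (hXY_int : ∀ i j, Integrable (fun ω => Y ω i * X ω j) μ)
    (hXY : ∀ i j, ∫ ω, Y ω i * X ω j ∂μ = if i = j then 1 else 0) (g : EuclideanSpace ℝ ι) :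
    ∫ ω, inner ℝ g (X ω) • Y ω ∂μ = g := by
  ext i
  rw [eval_integral_piLp (fun i => (integrable_inner_smul hXY_int g).eval_piLp i)]
  simp only [inner_smul_apply_eq_sum]
  rw [integral_finsetSum _ fun j _ => (hXY_int i j).const_mul (g j)]
  simp [integral_const_mul, hXY]

end IdentityCovariance

section NoiseFreeEstimator

variable {ι Ω : Type*} [Fintype ι] {m0 : MeasurableSpace Ω} {μ : Measure Ω}
  {X Y : Ω → EuclideanSpace ℝ ι} {L : EuclideanSpace ℝ ι → ℝ} {D₁ : ℝ}

theorem integrable_symmDiffQuot_sub_inner_gradient_smul (hL : ContDiff ℝ 3 L)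
    (hLbd : ∀ x, ‖iteratedFDeriv ℝ 3 L x‖ ≤ D₁) (hX : AEStronglyMeasurable X μ)
    (hY : AEStronglyMeasurable Y μ) (hmom_int : Integrable (fun ω => ‖X ω‖ ^ 3 * ‖Y ω‖) μ)
    (θ : EuclideanSpace ℝ ι) {c : ℝ} (hc : 0 < c) :
    Integrable (fun ω => (symmDiffQuot L θ c (X ω) - inner ℝ (gradient L θ) (X ω)) • Y ω) μ := by
  have hcont : Continuous fun v => symmDiffQuot L θ c v - inner ℝ (gradient L θ) v := by
    unfold symmDiffQuot
    have := hL.continuous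
    fun_prop
  exact (hmom_int.const_mul (c ^ 2 * D₁ / 6)).mono' ((hcont.comp_aestronglyMeasurable hX).smul hY)
    (ae_of_all _ fun ω => norm_symmDiffQuot_sub_inner_gradient_smul_le hL hLbd θ _ _ hc)

theorem integrable_symmDiffQuot_smul (hL : ContDiff ℝ 3 L)
    (hLbd : ∀ x, ‖iteratedFDeriv ℝ 3 L x‖ ≤ D₁) (hX : AEStronglyMeasurable X μ)
    (hY : AEStronglyMeasurable Y μ) (hXY_int : ∀ i j, Integrable (fun ω => Y ω i * X ω j) μ)
    (hmom_int : Integrable (fun ω => ‖X ω‖ ^ 3 * ‖Y ω‖) μ) (θ : EuclideanSpace ℝ ι) {c : ℝ}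
    (hc : 0 < c) : Integrable (fun ω => symmDiffQuot L θ c (X ω) • Y ω) μ :=
  ((integrable_inner_smul hXY_int (gradient L θ)).add
    (integrable_symmDiffQuot_sub_inner_gradient_smul hL hLbd hX hY hmom_int θ hc)).congr
    (ae_of_all _ fun ω => by simp only [Pi.add_apply, ← add_smul, add_sub_cancel])

theorem norm_integral_symmDiffQuot_smul_sub_gradient_le [DecidableEq ι] {D₂ : ℝ}
    (hL : ContDiff ℝ 3 L) (hLbd : ∀ x, ‖iteratedFDeriv ℝ 3 L x‖ ≤ D₁)
    (hX : AEStronglyMeasurable X μ) (hY : AEStronglyMeasurable Y μ)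
    (hXY_int : ∀ i j, Integrable (fun ω => Y ω i * X ω j) μ)
    (hXY : ∀ i j, ∫ ω, Y ω i * X ω j ∂μ = if i = j then 1 else 0)
    (hmom_int : Integrable (fun ω => ‖X ω‖ ^ 3 * ‖Y ω‖) μ) (hmom : ∫ ω, ‖X ω‖ ^ 3 * ‖Y ω‖ ∂μ ≤ D₂)
    (θ : EuclideanSpace ℝ ι) {c : ℝ} (hc : 0 < c) :
    ‖∫ ω, symmDiffQuot L θ c (X ω) • Y ω ∂μ - gradient L θ‖ ≤ c ^ 2 * D₁ * D₂ / 6 := by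
  set g := gradient L θ
  have hD₁ : 0 ≤ D₁ := (norm_nonneg _).trans (hLbd θ)
  have hsplit : (fun ω => symmDiffQuot L θ c (X ω) • Y ω) = fun ω =>
      inner ℝ g (X ω) • Y ω + (symmDiffQuot L θ c (X ω) - inner ℝ g (X ω)) • Y ω := by
    simp only [← add_smul, add_sub_cancel]
  rw [hsplit, integral_add (integrable_inner_smul hXY_int g)
    (integrable_symmDiffQuot_sub_inner_gradient_smul hL hLbd hX hY hmom_int θ hc),
    integral_inner_smul_eq_self hXY_int hXY, add_sub_cancel_left]
  calc _ ≤ ∫ ω, c ^ 2 * D₁ / 6 * (‖X ω‖ ^ 3 * ‖Y ω‖) ∂μ :=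
        norm_integral_le_of_norm_le (hmom_int.const_mul _)
          (ae_of_all _ fun ω => norm_symmDiffQuot_sub_inner_gradient_smul_le hL hLbd θ _ _ hc)
    _ = c ^ 2 * D₁ / 6 * ∫ ω, ‖X ω‖ ^ 3 * ‖Y ω‖ ∂μ := integral_const_mul _ _
    _ ≤ c ^ 2 * D₁ / 6 * D₂ := by gcongr
    _ = c ^ 2 * D₁ * D₂ / 6 := by ring

end NoiseFreeEstimator

theorem bias_bound_of_two_query_gradient_estimator_general
    (d : ℕ)
    (L : EuclideanSpace ℝ (Fin d) → ℝ)
    (D₁ D₂ : ℝ)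
    (hL : ContDiff ℝ 3 L)
    (hLbd : ∀ x, ‖iteratedFDeriv ℝ 3 L x‖ ≤ D₁)
    {Ω : Type*} {m0 : MeasurableSpace Ω} (μ : Measure Ω) [IsProbabilityMeasure μ]
    (Δ : Ω → EuclideanSpace ℝ (Fin d)) (hΔ : Measurable Δ)
    (φ : EuclideanSpace ℝ (Fin d) → EuclideanSpace ℝ (Fin d)) (hφ : Measurable φ)
    -- `E[φ(Δ) Δᵀ] = I`
    (hid_int : ∀ i j : Fin d, Integrable (fun ω => φ (Δ ω) i * Δ ω j) μ)
    (hid : ∀ i j : Fin d, ∫ ω, φ (Δ ω) i * Δ ω j ∂μ = if i = j then (1 : ℝ) else 0)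
    -- integrable noises with `E[ε⁺ − ε⁻ | Δ] = 0` a.s.
    (εp εm : Ω → ℝ) (hεp : Integrable εp μ) (hεm : Integrable εm μ)
    (hnoise : μ[fun ω => εp ω - εm ω|MeasurableSpace.comap Δ inferInstance] =ᵐ[μ] 0)
    -- the two-query gradient estimator
    (ghat : EuclideanSpace ℝ (Fin d) → ℝ → Ω → EuclideanSpace ℝ (Fin d))
    (hghat : ∀ θ c ω, ghat θ c ω
      = ((L (θ + c • Δ ω) + εp ω - L (θ - c • Δ ω) - εm ω) / (2 * c)) • φ (Δ ω))
    -- moment bound `E[‖Δ‖³ ‖φ(Δ)‖] ≤ D₂`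
    (hmom_int : Integrable (fun ω => ‖Δ ω‖ ^ 3 * ‖φ (Δ ω)‖) μ)
    (hmom : ∫ ω, ‖Δ ω‖ ^ 3 * ‖φ (Δ ω)‖ ∂μ ≤ D₂)
    (θ : EuclideanSpace ℝ (Fin d)) (c : ℝ) (hc : 0 < c)
    (hint : Integrable (ghat θ c) μ) :
    ‖(∫ ω, ghat θ c ω ∂μ) - gradient L θ‖ ≤ c ^ 2 * D₁ * D₂ / 6 := by
  have hX : AEStronglyMeasurable Δ μ := hΔ.aestronglyMeasurable
  have hY : AEStronglyMeasurable (fun ω => φ (Δ ω)) μ := (hφ.comp hΔ).aestronglyMeasurable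
  have hS_int := integrable_symmDiffQuot_smul hL hLbd hX hY hid_int hmom_int θ hc
  -- the factor `(2 * c)⁻¹` goes with `φ (Δ ω)`, so that the scalar is exactly the one in `hnoise`
  set N := fun ω => (εp ω - εm ω) • ((2 * c)⁻¹ • φ (Δ ω))
  have hsplit : ghat θ c = fun ω => symmDiffQuot L θ c (Δ ω) • φ (Δ ω) + N ω := by
    funext ω
    simp only [N, hghat, symmDiffQuot, smul_smul, ← add_smul]
    congr 1
    ring
  have hN_int : Integrable N μ :=
    (hint.sub hS_int).congr (ae_of_all _ fun ω => by simp [hsplit])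
  have hN_meas : AEStronglyMeasurable[MeasurableSpace.comap Δ inferInstance]
      (fun ω => (2 * c)⁻¹ • φ (Δ ω)) μ :=
    ((hφ.comp (comap_measurable Δ)).const_smul ((2 * c)⁻¹ : ℝ)).aestronglyMeasurable
  have hN : ∫ ω, N ω ∂μ = 0 :=
    integral_smul_eq_zero_of_condExp_eq_zero hΔ.comap_le (hεp.sub hεm) hnoise hN_meas hN_int
  rw [hsplit, integral_add hS_int hN_int, hN, add_zero]
  exact norm_integral_symmDiffQuot_smul_sub_gradient_le hL hLbd hX hY hid_int hid hmom_int hmom θ hc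

/-- bias part of Lemma 1: under the standing assumptions, the two-query
gradient estimator `ghat(θ,c)` satisfies the bias bound
`‖E[ghat(θ,c)] − ∇L(θ)‖ ≤ c² D₁ D₂ / 6` for every `θ` and every `c > 0`, provided
`E[‖Δ‖³ ‖φ(Δ)‖] ≤ D₂`. -/
theorem bias_bound_of_two_query_gradient_estimator
    (d : ℕ) (hd : 1 ≤ d)
    (L : EuclideanSpace ℝ (Fin d) → ℝ)
    (D₁ D₂ : ℝ) (hD₁ : 0 ≤ D₁) (hD₂ : 0 ≤ D₂)
    (hL : ContDiff ℝ 3 L)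
    (hLbd : ∀ x, ‖iteratedFDeriv ℝ 3 L x‖ ≤ D₁)
    {Ω : Type*} {m0 : MeasurableSpace Ω} (μ : Measure Ω) [IsProbabilityMeasure μ]
    (Δ : Ω → EuclideanSpace ℝ (Fin d)) (hΔ : Measurable Δ)
    (φ : EuclideanSpace ℝ (Fin d) → EuclideanSpace ℝ (Fin d)) (hφ : Measurable φ)
    -- `E[φ(Δ) Δᵀ] = I`
    (hid_int : ∀ i j : Fin d, Integrable (fun ω => φ (Δ ω) i * Δ ω j) μ)
    (hid : ∀ i j : Fin d, ∫ ω, φ (Δ ω) i * Δ ω j ∂μ = if i = j then (1 : ℝ) else 0)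
    -- integrable noises with `E[ε⁺ − ε⁻ | Δ] = 0` a.s.
    (εp εm : Ω → ℝ) (hεp : Integrable εp μ) (hεm : Integrable εm μ)
    (hnoise : μ[fun ω => εp ω - εm ω|MeasurableSpace.comap Δ inferInstance] =ᵐ[μ] 0)
    -- the two-query gradient estimator
    (ghat : EuclideanSpace ℝ (Fin d) → ℝ → Ω → EuclideanSpace ℝ (Fin d))
    (hghat : ∀ θ c ω, ghat θ c ω
      = ((L (θ + c • Δ ω) + εp ω - L (θ - c • Δ ω) - εm ω) / (2 * c)) • φ (Δ ω))
    -- moment bound `E[‖Δ‖³ ‖φ(Δ)‖] ≤ D₂`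
    (hmom_int : Integrable (fun ω => ‖Δ ω‖ ^ 3 * ‖φ (Δ ω)‖) μ)
    (hmom : ∫ ω, ‖Δ ω‖ ^ 3 * ‖φ (Δ ω)‖ ∂μ ≤ D₂)
    (θ : EuclideanSpace ℝ (Fin d)) (c : ℝ) (hc : 0 < c)
    (hint : Integrable (ghat θ c) μ) :
    ‖(∫ ω, ghat θ c ω ∂μ) - gradient L θ‖ ≤ c ^ 2 * D₁ * D₂ / 6 :=
  bias_bound_of_two_query_gradient_estimator_general d L D₁ D₂ hL hLbd (m0 := m0) μ Δ hΔ φ hφ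
    hid_int hid εp εm hεp hεm hnoise ghat hghat hmom_int hmom θ c hc hint
end

section
/- Trace of the asymptotic covariance for Hessian-covariance perturbations (HARP): let H be a real symmetric positive definite d×d matrix with eigenvalues λ_1, …, λ_d (with multiplicity), and let a > 0, τ ≥ 0, γ₀ > 0 satisfy 2·a·λ_i > τ for all i. Then the unique symmetric solution B of the Lyapunov equation (a·H − (τ/2)·I)·B + B·(a·H − (τ/2)·I) = γ₀·H satisfies trace(B) = γ₀·Σ_{i=1}^{d} 1/(2·a − τ/λ_i) = γ₀·Σ_{i=1}^{d} λ_i/(2·a·λ_i − τ). -/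
open Matrix

/-- trace of the asymptotic covariance, HARP Hessian-covariance
perturbations: if `H` is symmetric positive definite with eigenvalues `λ_i`, and
`2aλ_i > τ ≥ 0`, `a > 0`, `γ₀ > 0`, then the (unique) symmetric solution `B` of
`(aH − (τ/2)I)B + B(aH − (τ/2)I) = γ₀ H` satisfies
`trace(B) = γ₀ Σ_i 1/(2a − τ/λ_i) = γ₀ Σ_i λ_i/(2aλ_i − τ)`. -/
theorem trace_of_asymptotic_covariance_of_hessian_covariance_perturbation
    (d : ℕ) (hd : 1 ≤ d)
    (H : Matrix (Fin d) (Fin d) ℝ) (hH : H.PosDef)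
    (a τ γ₀ : ℝ) (ha : 0 < a) (hτ : 0 ≤ τ) (hγ₀ : 0 < γ₀)
    (heig : ∀ i, τ < 2 * a * hH.1.eigenvalues i)
    (B : Matrix (Fin d) (Fin d) ℝ) (hBsymm : B.IsSymm)
    (hB : (a • H - (τ / 2) • (1 : Matrix (Fin d) (Fin d) ℝ)) * B
        + B * (a • H - (τ / 2) • (1 : Matrix (Fin d) (Fin d) ℝ))
      = γ₀ • H) :
    B.trace = γ₀ * ∑ i, 1 / (2 * a - τ / hH.1.eigenvalues i) ∧
      B.trace = γ₀ * ∑ i, hH.1.eigenvalues i / (2 * a * hH.1.eigenvalues i - τ) := by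
  set μ := hH.1.eigenvalues with hμ
  have hμpos : ∀ i, 0 < μ i := fun i => hH.eigenvalues_pos i
  set U : Matrix (Fin d) (Fin d) ℝ := (hH.1.eigenvectorUnitary : Matrix (Fin d) (Fin d) ℝ)
    with hU
  have hUU : U * star U = 1 := (Matrix.mem_unitaryGroup_iff).mp hH.1.eigenvectorUnitary.2
  have hUU' : star U * U = 1 := (Matrix.mem_unitaryGroup_iff').mp hH.1.eigenvectorUnitary.2
  have hspec : H = U * diagonal μ * star U := by
    have := hH.1.spectral_theorem
    simpa using this
  set C : Matrix (Fin d) (Fin d) ℝ := star U * B * U with hC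
  -- conjugated Lyapunov equation
  have hD : star U * H * U = diagonal μ := by
    rw [hspec]
    rw [show star U * (U * diagonal μ * star U) * U
        = (star U * U) * diagonal μ * (star U * U) by noncomm_ring]
    rw [hUU']; simp
  have hLyap : (a • diagonal μ - (τ / 2) • (1 : Matrix (Fin d) (Fin d) ℝ)) * C
      + C * (a • diagonal μ - (τ / 2) • (1 : Matrix (Fin d) (Fin d) ℝ)) = γ₀ • diagonal μ := by
    have := congrArg (fun M => star U * M * U) hB
    simp only [Matrix.add_mul, Matrix.mul_add] at this
    calc (a • diagonal μ - (τ / 2) • (1 : Matrix (Fin d) (Fin d) ℝ)) * C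
          + C * (a • diagonal μ - (τ / 2) • (1 : Matrix (Fin d) (Fin d) ℝ))
        = star U * ((a • H - (τ / 2) • 1) * B) * U
          + star U * (B * (a • H - (τ / 2) • 1)) * U := by
          rw [← hD]
          simp only [Matrix.sub_mul, Matrix.mul_sub, Matrix.smul_mul, Matrix.mul_smul, hC]
          rw [show star U * H * U * (star U * B * U)
              = star U * H * (U * star U) * B * U by noncomm_ring, hUU]
          rw [show star U * B * U * (star U * H * U)
              = star U * B * (U * star U) * H * U by noncomm_ring, hUU]
          simp only [Matrix.mul_one, Matrix.one_mul]
          congr 1 <;> ring_nf <;>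
            simp [Matrix.mul_assoc, Matrix.smul_mul, Matrix.mul_smul]
      _ = star U * ((a • H - (τ / 2) • 1) * B + B * (a • H - (τ / 2) • 1)) * U := by
          simp [Matrix.mul_add, Matrix.add_mul]
      _ = star U * (γ₀ • H) * U := by rw [hB]
      _ = γ₀ • diagonal μ := by
          rw [← hD]; simp [Matrix.mul_smul, Matrix.smul_mul, Matrix.mul_assoc]
  -- diagonal entries of C
  have hCdiag : ∀ i, C i i = γ₀ * (μ i / (2 * a * μ i - τ)) := by
    intro i
    have h1 := congrFun (congrFun hLyap i) i
    simp only [Matrix.add_apply, Matrix.mul_apply, Matrix.sub_apply, Matrix.smul_apply,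
      Matrix.one_apply, diagonal_apply, smul_eq_mul] at h1
    have h2 : (2 * a * μ i - τ) * C i i = γ₀ * μ i := by
      have hs : ∀ (f : Fin d → ℝ), (∑ j, f j) = f i + ∑ j ∈ Finset.univ.erase i, f j := by
        intro f
        rw [Finset.add_sum_erase _ f (Finset.mem_univ i)]
      rw [hs, hs] at h1
      have hz1 : ∀ j ∈ Finset.univ.erase i,
          (a * (if i = j then μ i else 0) - τ / 2 * (if i = j then 1 else 0)) * C j i = 0 := by
        intro j hj
        have : i ≠ j := fun h => (Finset.mem_erase.mp hj).1 h.symm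
        simp [this]
      have hz2 : ∀ j ∈ Finset.univ.erase i,
          C i j * (a * (if j = i then μ j else 0) - τ / 2 * (if j = i then 1 else 0)) = 0 := by
        intro j hj
        have : j ≠ i := (Finset.mem_erase.mp hj).1
        simp [this]
      rw [Finset.sum_eq_zero hz1, Finset.sum_eq_zero hz2] at h1
      simp only [if_pos rfl, add_zero, if_true] at h1
      linear_combination h1
    have hne : 2 * a * μ i - τ ≠ 0 := by have := heig i; linarith
    field_simp at h2 ⊢
    linarith [h2]
  have htrace : B.trace = ∑ i, C i i := by
    have : C.trace = B.trace := by
      rw [hC, Matrix.trace_mul_cycle, hUU, Matrix.one_mul]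
    rw [← this, Matrix.trace]
    rfl
  have hkey : B.trace = γ₀ * ∑ i, μ i / (2 * a * μ i - τ) := by
    rw [htrace, Finset.mul_sum]
    exact Finset.sum_congr rfl fun i _ => hCdiag i
  refine ⟨?_, hkey⟩
  rw [hkey]
  congr 1
  refine Finset.sum_congr rfl fun i _ => ?_
  have h1 : μ i ≠ 0 := ne_of_gt (hμpos i)
  have h2 : 2 * a * μ i - τ ≠ 0 := by have := heig i; linarith
  field_simp
end
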